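/- Let A be n×n, B n×m, E n×d, Q symmetric positive semidefinite, R symmetric positive definite, α ∈ (0,1), λ > 0, w̄ ∈ ℝ^d, and sample covariance matrix Σ̂ (d×d, symmetric positive semidefinite). Define the value-iteration sequences P_0 = 0, g_0 = 0, z_0 = 0 and, with blocks H_xx^i = Q + αAᵀP_iA, H_xu^i = αAᵀP_iB, H_xw^i = αAᵀP_iE, H_uu^i = R + αBᵀP_iB, H_uw^i = αBᵀP_iE, H_ww^i = αEᵀP_iE − λI, G_x^i = αAᵀg_i, G_u^i = αBᵀg_i, G_w^i = αEᵀg_i + 2λw̄: P_{i+1} = H_xx^i − [H_xu^i H_xw^i][[H_uu^i, H_uw^i],[H_uw^iᵀ, H_ww^i]]⁻¹[H_xu^iᵀ; H_xw^iᵀ], g_{i+1} = G_x^i − [H_xu^i H_xw^i][[H_uu^i, H_uw^i],[H_uw^iᵀ, H_ww^i]]⁻¹[G_u^i; G_w^i], z_{i+1} = αz_i − λ‖w̄‖² − tr(H_ww^{i,−1}(λ²Σ̂ + ¼G_w^iG_w^{iᵀ})) − ¼(G_u^i − H_uw^iH_ww^{i,−1}G_w^i)ᵀ(H_uu^i − H_uw^iH_ww^{i,−1}H_uw^{iᵀ})⁻¹(G_u^i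 − H_uw^iH_ww^{i,−1}G_w^i). Also define the Q-learning sequences H_0 = 0, G_0 = 0, s_0 = 0, K_0 = 0, r_0 = 0, L_0 = 0, l_0 = 0, and for i ≥ 0: H_{i+1} = blockdiag(Q,R,−λI) + α(T_i S)ᵀ H_i (T_i S), (G_{i+1})ᵀ = α(G_iᵀ + 2b_iᵀH_i)T_i S + [0, 0, 2λw̄ᵀ], s_{i+1} = α(s_i + G_iᵀb_i + b_iᵀH_ib_i) − λ‖w̄‖², where S = [A B E], T_i = [I; K_i; L_i], b_i = [0; r_i; l_i], and for i ≥ 1 the policies (K_i, r_i) and (L_i, l_i) are computed from the blocks of (H_i, G_i) by K_i = (H_uu − H_uwH_ww⁻¹H_uwᵀ)⁻¹(H_uwH_ww⁻¹H_xwᵀ − H_xuᵀ), r_i = −½(H_uu − H_uwH_ww⁻¹H_uwᵀ)⁻¹(G_u − H_uwH_ww⁻¹G_w), L_i = (H_ww − H_uwᵀH_uu⁻¹H_uw)⁻¹(H_uwᵀH_uu⁻¹H_xuᵀ − H_xwᵀ), l_i = −½(H_ww − H_uwᵀH_uu⁻¹H_uw)⁻¹(G_w − H_uwᵀH_uu⁻¹G_u).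 Assume λI − αEᵀP_iE is positive definite for every i. Then for every i ≥ 1, with Σ̂ = 0 in the z-recursion: H_i equals the block matrix [[Q+αAᵀP_{i−1}A, αAᵀP_{i−1}B, αAᵀP_{i−1}E],[∗, R+αBᵀP_{i−1}B, αBᵀP_{i−1}E],[∗, ∗, αEᵀP_{i−1}E−λI]], G_iᵀ = [αg_{i−1}ᵀA, αg_{i−1}ᵀB, αg_{i−1}ᵀE + 2λw̄ᵀ], and s_i = αz_{i−1} − λ‖w̄‖². -/

import Mathlib

/-!
A Q-learning step evaluates the current policy on the quadratic Q-function
`H = [[Hxx, F], [Fᵀ, M]]` of the current value matrix `P`. The two Schur-complement formulas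
for the gains `K, L` and offsets `r, l` are two block expressions of the same inverse `M⁻¹`, so
`[K; L] = -M⁻¹Fᵀ` and `[r; l] = -½ M⁻¹ h`. With `T = [I; -M⁻¹Fᵀ]` one has
`H T = [Hxx - F M⁻¹ Fᵀ; 0]`: hence `Tᵀ H T` is the Riccati update of `P`, the linear term becomes
`Gx - F M⁻¹ h` and the constant drops by `¼ hᵀ M⁻¹ h`, which is the value-iteration update of
`(P, g, z)` when `Σ̂ = 0`. Induction on `i` identifies every Q-learning iterate with the
Q-function of the value-iteration iterate.

Invertibility of `M` comes from its saddle structure, `Huu ≻ 0` and `Hww ≺ 0`. The second is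
the hypothesis; the first needs `P_i ⪰ 0`, which propagates: `xᵀ P_{i+1} x` is the quadratic
form of `H` at `T x`, where `H` is stationary in the `w`-direction, so it equals the (nonnegative)
form at the `(x, u)`-part minus the (nonpositive) form at the `w`-part.
-/

open Matrix

theorem Matrix.inv_neg {n α : Type*} [Fintype n] [DecidableEq n] [CommRing α]
    (A : Matrix n n α) : (-A)⁻¹ = -A⁻¹ := by
  by_cases h : IsUnit A.det
  · exact inv_eq_left_inv (by rw [neg_mul_neg, nonsing_inv_mul _ h])
  · have h' : ¬IsUnit (-A).det := by
      rwa [det_neg, IsUnit.mul_iff, and_iff_right ((isUnit_neg_one (α := α)).pow _)]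
    rw [nonsing_inv_apply_not_isUnit _ h, nonsing_inv_apply_not_isUnit _ h', neg_zero]

theorem Matrix.PosSemidef.transpose_eq_self {n : Type*} [Fintype n] {M : Matrix n n ℝ}
    (hM : M.PosSemidef) : Mᵀ = M :=
  (isHermitian_iff_isSymm.1 hM.isHermitian).eq

theorem Matrix.PosDef.transpose_eq_self {n : Type*} [Fintype n] {M : Matrix n n ℝ}
    (hM : M.PosDef) : Mᵀ = M :=
  hM.posSemidef.transpose_eq_self

theorem Matrix.PosDef.transpose_eq_self_of_neg {n : Type*} [Fintype n] {M : Matrix n n ℝ}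
    (hM : (-M).PosDef) : Mᵀ = M := by
  rw [← neg_neg M, transpose_neg, hM.transpose_eq_self]

theorem Matrix.trace_mul_vecMulVec {n R : Type*} [Fintype n] [CommSemiring R] (M : Matrix n n R)
    (v w : n → R) : (M * vecMulVec v w).trace = w ⬝ᵥ (M *ᵥ v) := by
  rw [mul_vecMulVec, trace_vecMulVec, dotProduct_comm]

theorem Sum.elim_smul_smul {ι κ R γ : Type*} [SMul R γ] (c : R) (f : ι → γ) (g : κ → γ) :
    Sum.elim (c • f) (c • g) = c • Sum.elim f g := by
  ext (i | i) <;> rfl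

theorem add_dotProduct_mulVec_add_of_dotProduct_mulVec_eq_zero {ι R : Type*} [Fintype ι]
    [CommRing R] {H : Matrix ι ι R} (hH : Hᵀ = H) {a J : ι → R}
    (hJ : J ⬝ᵥ (H *ᵥ (a + J)) = 0) :
    (a + J) ⬝ᵥ (H *ᵥ (a + J)) = a ⬝ᵥ (H *ᵥ a) - J ⬝ᵥ (H *ᵥ J) := by
  have hsymm : a ⬝ᵥ (H *ᵥ J) = J ⬝ᵥ (H *ᵥ a) := by
    rw [dotProduct_mulVec, dotProduct_comm, ← mulVec_transpose, hH]
  simp only [mulVec_add, dotProduct_add, add_dotProduct] at hJ ⊢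
  linear_combination hsymm + 2 * hJ

section SchurComplement
variable {m d α : Type*} [Fintype m] [Fintype d] [DecidableEq m] [DecidableEq d] [CommRing α]
  {A : Matrix m m α} {B : Matrix m d α} {C : Matrix d m α} {D : Matrix d d α}

theorem inv_fromBlocks_eq_of_isUnit₂₂ (hD : IsUnit D) (hSD : IsUnit (A - B * D⁻¹ * C)) :
    (fromBlocks A B C D)⁻¹ =
      fromBlocks (A - B * D⁻¹ * C)⁻¹ (-((A - B * D⁻¹ * C)⁻¹ * B * D⁻¹))
        (-(D⁻¹ * C * (A - B * D⁻¹ * C)⁻¹))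
        (D⁻¹ + D⁻¹ * C * (A - B * D⁻¹ * C)⁻¹ * B * D⁻¹) := by
  have := hD.invertible
  have : Invertible (A - B * ⅟D * C) := by rw [invOf_eq_nonsing_inv]; exact hSD.invertible
  have := fromBlocks₂₂Invertible A B C D
  simpa only [invOf_eq_nonsing_inv] using invOf_fromBlocks₂₂_eq A B C D

theorem inv_fromBlocks_eq_of_isUnit₁₁ (hA : IsUnit A) (hSA : IsUnit (D - C * A⁻¹ * B)) :
    (fromBlocks A B C D)⁻¹ =
      fromBlocks (A⁻¹ + A⁻¹ * B * (D - C * A⁻¹ * B)⁻¹ * C * A⁻¹)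
        (-(A⁻¹ * B * (D - C * A⁻¹ * B)⁻¹)) (-((D - C * A⁻¹ * B)⁻¹ * C * A⁻¹))
        (D - C * A⁻¹ * B)⁻¹ := by
  have := hA.invertible
  have : Invertible (D - C * ⅟A * B) := by rw [invOf_eq_nonsing_inv]; exact hSA.invertible
  have := fromBlocks₁₁Invertible A B C D
  simpa only [invOf_eq_nonsing_inv] using invOf_fromBlocks₁₁_eq A B C D

theorem inv_fromBlocks_eq_of_isUnit (hA : IsUnit A) (hD : IsUnit D)
    (hSD : IsUnit (A - B * D⁻¹ * C)) (hSA : IsUnit (D - C * A⁻¹ * B)) :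
    (fromBlocks A B C D)⁻¹ =
      fromBlocks (A - B * D⁻¹ * C)⁻¹ (-((A - B * D⁻¹ * C)⁻¹ * B * D⁻¹))
        (-((D - C * A⁻¹ * B)⁻¹ * C * A⁻¹)) (D - C * A⁻¹ * B)⁻¹ := by
  have h := (inv_fromBlocks_eq_of_isUnit₂₂ hD hSD).symm.trans
    (inv_fromBlocks_eq_of_isUnit₁₁ hA hSA)
  rw [fromBlocks_inj] at h
  rw [inv_fromBlocks_eq_of_isUnit₂₂ hD hSD, h.2.2.1, h.2.2.2]

theorem fromRows_schur_eq_neg_inv_fromBlocks_mul (hA : IsUnit A) (hD : IsUnit D)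
    (hSD : IsUnit (A - B * D⁻¹ * C)) (hSA : IsUnit (D - C * A⁻¹ * B)) {n : Type*}
    (Fu : Matrix m n α) (Fw : Matrix d n α) :
    fromRows ((A - B * D⁻¹ * C)⁻¹ * (B * D⁻¹ * Fw - Fu))
        ((D - C * A⁻¹ * B)⁻¹ * (C * A⁻¹ * Fu - Fw)) =
      -((fromBlocks A B C D)⁻¹ * fromRows Fu Fw) := by
  rw [inv_fromBlocks_eq_of_isUnit hA hD hSD hSA, fromBlocks_mul_fromRows, fromRows_neg]
  congr 1 <;> simp only [Matrix.mul_sub, Matrix.neg_mul, Matrix.mul_assoc] <;> abel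

theorem sumElim_schur_eq_inv_fromBlocks_mulVec (hA : IsUnit A) (hD : IsUnit D)
    (hSD : IsUnit (A - B * D⁻¹ * C)) (hSA : IsUnit (D - C * A⁻¹ * B))
    (gu : m → α) (gw : d → α) :
    Sum.elim ((A - B * D⁻¹ * C)⁻¹ *ᵥ (gu - (B * D⁻¹) *ᵥ gw))
        ((D - C * A⁻¹ * B)⁻¹ *ᵥ (gw - (C * A⁻¹) *ᵥ gu)) =
      (fromBlocks A B C D)⁻¹ *ᵥ Sum.elim gu gw := by
  rw [inv_fromBlocks_eq_of_isUnit hA hD hSD hSA, fromBlocks_mulVec, Sum.elim_comp_inl,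
    Sum.elim_comp_inr]
  congr 1 <;> simp only [mulVec_sub, Matrix.neg_mulVec, ← mulVec_mulVec] <;> abel

theorem sumElim_dotProduct_inv_fromBlocks_mulVec (hD : IsUnit D) (hDs : Dᵀ = D)
    (hSD : IsUnit (A - B * D⁻¹ * Bᵀ)) (gu : m → α) (gw : d → α) :
    Sum.elim gu gw ⬝ᵥ ((fromBlocks A B Bᵀ D)⁻¹ *ᵥ Sum.elim gu gw) =
      gw ⬝ᵥ (D⁻¹ *ᵥ gw) + (gu - (B * D⁻¹) *ᵥ gw) ⬝ᵥ
        ((A - B * D⁻¹ * Bᵀ)⁻¹ *ᵥ (gu - (B * D⁻¹) *ᵥ gw)) := by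
  have hT : D⁻¹ * Bᵀ = (B * D⁻¹)ᵀ := by rw [transpose_mul, transpose_nonsing_inv, hDs]
  rw [inv_fromBlocks_eq_of_isUnit₂₂ hD hSD, fromBlocks_mulVec, Sum.elim_comp_inl,
    Sum.elim_comp_inr, sumElim_dotProduct_sumElim, hT]
  simp only [Matrix.neg_mulVec, Matrix.add_mulVec, Matrix.mul_assoc, ← mulVec_mulVec,
    dotProduct_add, dotProduct_neg, mulVec_sub, dotProduct_sub, sub_dotProduct]
  rw [dotProduct_mulVec gw (B * D⁻¹)ᵀ, dotProduct_mulVec gw (B * D⁻¹)ᵀ, vecMul_transpose,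
    ← mulVec_mulVec]
  ring

end SchurComplement

section Saddle
variable {m d : Type*} [Fintype m] [Fintype d] {Huu : Matrix m m ℝ} {Huw : Matrix m d ℝ}
  {Hww : Matrix d d ℝ}

theorem posDef_sub_schur_of_saddle [DecidableEq d] (hu : Huu.PosDef) (hw : (-Hww).PosDef) :
    (Huu - Huw * Hww⁻¹ * Huwᵀ).PosDef := by
  have h := hu.add_posSemidef (hw.inv.posSemidef.mul_mul_conjTranspose_same Huw)
  rwa [Matrix.inv_neg, conjTranspose_eq_transpose_of_trivial, Matrix.mul_neg, Matrix.neg_mul,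
    ← sub_eq_add_neg] at h

theorem posDef_neg_schur_of_saddle [DecidableEq m] (hu : Huu.PosDef) (hw : (-Hww).PosDef) :
    (-(Hww - Huwᵀ * Huu⁻¹ * Huw)).PosDef := by
  have h := hw.add_posSemidef (hu.inv.posSemidef.conjTranspose_mul_mul_same Huw)
  rw [conjTranspose_eq_transpose_of_trivial] at h
  convert h using 1
  abel

theorem isUnit_of_saddle [DecidableEq m] [DecidableEq d] (hu : Huu.PosDef)
    (hw : (-Hww).PosDef) :
    IsUnit Huu ∧ IsUnit Hww ∧ IsUnit (Huu - Huw * Hww⁻¹ * Huwᵀ) ∧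
      IsUnit (Hww - Huwᵀ * Huu⁻¹ * Huw) :=
  ⟨hu.isUnit, neg_neg Hww ▸ hw.isUnit.neg, (posDef_sub_schur_of_saddle hu hw).isUnit,
    neg_neg (Hww - Huwᵀ * Huu⁻¹ * Huw) ▸ (posDef_neg_schur_of_saddle hu hw).isUnit.neg⟩

theorem isUnit_fromBlocks_of_saddle [DecidableEq m] [DecidableEq d] (hu : Huu.PosDef)
    (hw : (-Hww).PosDef) : IsUnit (fromBlocks Huu Huw Huwᵀ Hww) := by
  obtain ⟨-, hww, hdu, -⟩ := isUnit_of_saddle (Huw := Huw) hu hw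
  have := hww.invertible
  have : Invertible (Huu - Huw * ⅟Hww * Huwᵀ) := by
    rw [invOf_eq_nonsing_inv]; exact hdu.invertible
  let := fromBlocks₂₂Invertible Huu Huw Huwᵀ Hww
  exact isUnit_of_invertible _

theorem transpose_fromBlocks_of_saddle (hu : Huu.PosDef) (hw : (-Hww).PosDef) :
    (fromBlocks Huu Huw Huwᵀ Hww)ᵀ = fromBlocks Huu Huw Huwᵀ Hww := by
  rw [fromBlocks_transpose, hu.transpose_eq_self, transpose_transpose,
    hw.transpose_eq_self_of_neg]

theorem schur_policy_eq {n : Type*} [DecidableEq m] [DecidableEq d]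
    {H : Matrix (n ⊕ m ⊕ d) (n ⊕ m ⊕ d) ℝ} {G : n ⊕ m ⊕ d → ℝ} {Hxx : Matrix n n ℝ}
    {C : Matrix (m ⊕ d) n ℝ} {Hxu : Matrix n m ℝ} {Hxw : Matrix n d ℝ} {gx : n → ℝ}
    {gu : m → ℝ} {gw : d → ℝ}
    (hH : H = fromBlocks Hxx (fromCols Hxu Hxw) C (fromBlocks Huu Huw Huwᵀ Hww))
    (hG : G = Sum.elim gx (Sum.elim gu gw)) (hu : Huu.PosDef) (hw : (-Hww).PosDef)
    {K : Matrix m n ℝ} {L : Matrix d n ℝ} {r : m → ℝ} {l : d → ℝ}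
    (hpol : ∀ (Hxu' : Matrix n m ℝ) (Hxw' : Matrix n d ℝ) (Huu' : Matrix m m ℝ)
        (Huw' : Matrix m d ℝ) (Hww' : Matrix d d ℝ) (Gu' : m → ℝ) (Gw' : d → ℝ),
      Hxu' = H.submatrix Sum.inl (fun a : m => Sum.inr (Sum.inl a)) →
      Hxw' = H.submatrix Sum.inl (fun a : d => Sum.inr (Sum.inr a)) →
      Huu' = H.submatrix (fun a : m => Sum.inr (Sum.inl a)) (fun a : m => Sum.inr (Sum.inl a)) →
      Huw' = H.submatrix (fun a : m => Sum.inr (Sum.inl a)) (fun a : d => Sum.inr (Sum.inr a)) →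
      Hww' = H.submatrix (fun a : d => Sum.inr (Sum.inr a)) (fun a : d => Sum.inr (Sum.inr a)) →
      Gu' = (fun a : m => G (Sum.inr (Sum.inl a))) →
      Gw' = (fun a : d => G (Sum.inr (Sum.inr a))) →
      K = (Huu' - Huw' * Hww'⁻¹ * Huw'ᵀ)⁻¹ * (Huw' * Hww'⁻¹ * Hxw'ᵀ - Hxu'ᵀ) ∧
      r = (-(1 : ℝ) / 2) • ((Huu' - Huw' * Hww'⁻¹ * Huw'ᵀ)⁻¹ *ᵥ (Gu' - (Huw' * Hww'⁻¹) *ᵥ Gw')) ∧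
      L = (Hww' - Huw'ᵀ * Huu'⁻¹ * Huw')⁻¹ * (Huw'ᵀ * Huu'⁻¹ * Hxu'ᵀ - Hxw'ᵀ) ∧
      l = (-(1 : ℝ) / 2) • ((Hww' - Huw'ᵀ * Huu'⁻¹ * Huw')⁻¹ *ᵥ (Gw' - (Huw'ᵀ * Huu'⁻¹) *ᵥ Gu'))) :
    fromRows K L = -((fromBlocks Huu Huw Huwᵀ Hww)⁻¹ * (fromCols Hxu Hxw)ᵀ) ∧
      Sum.elim r l = (-1 / 2 : ℝ) • ((fromBlocks Huu Huw Huwᵀ Hww)⁻¹ *ᵥ Sum.elim gu gw) := by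
  subst hH hG
  obtain ⟨hK, hr, hL, hl⟩ := hpol Hxu Hxw Huu Huw Hww gu gw rfl rfl rfl rfl rfl rfl rfl
  obtain ⟨huu, hww, hdu, hdw⟩ := isUnit_of_saddle (Huw := Huw) hu hw
  constructor
  · rw [hK, hL, transpose_fromCols]
    exact fromRows_schur_eq_neg_inv_fromBlocks_mul huu hww hdu hdw _ _
  · rw [hr, hl, Sum.elim_smul_smul, sumElim_schur_eq_inv_fromBlocks_mulVec huu hww hdu hdw]

end Saddle

section PolicyEvaluation
variable {n k : Type*} [Fintype n] [Fintype k]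

theorem fromBlocks_mul_fromRows_one_neg_inv {α : Type*} [CommRing α] [DecidableEq n]
    [DecidableEq k] {Hxx : Matrix n n α} {F : Matrix n k α} {C : Matrix k n α}
    {M : Matrix k k α} (hM : IsUnit M) :
    fromBlocks Hxx F C M * fromRows (1 : Matrix n n α) (-(M⁻¹ * C)) =
      fromRows (Hxx - F * M⁻¹ * C) 0 := by
  rw [fromBlocks_mul_fromRows, Matrix.mul_neg, Matrix.mul_neg,
    mul_nonsing_inv_cancel_left _ _ ((isUnit_iff_isUnit_det M).mp hM), Matrix.mul_one,
    Matrix.mul_one, add_neg_cancel, Matrix.mul_assoc, sub_eq_add_neg]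

theorem transpose_fromRows_mul_fromBlocks_mul_fromRows {α : Type*} [CommRing α]
    [DecidableEq n] [DecidableEq k] {Hxx : Matrix n n α} {F : Matrix n k α}
    {C : Matrix k n α} {M : Matrix k k α} (hM : IsUnit M) :
    (fromRows (1 : Matrix n n α) (-(M⁻¹ * C)))ᵀ * fromBlocks Hxx F C M *
        fromRows (1 : Matrix n n α) (-(M⁻¹ * C)) =
      Hxx - F * M⁻¹ * C := by
  rw [Matrix.mul_assoc, fromBlocks_mul_fromRows_one_neg_inv hM, transpose_fromRows,
    fromCols_mul_fromRows, transpose_one, Matrix.one_mul, Matrix.mul_zero, add_zero]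

theorem vecMul_fromRows_one_neg_inv {α : Type*} [CommRing α] [DecidableEq n] [DecidableEq k]
    {Hxx : Matrix n n α} {F : Matrix n k α} {M : Matrix k k α} (hM : IsUnit M) (hMs : Mᵀ = M)
    (gx : n → α) (h v : k → α) (c : α) :
    (Sum.elim gx h + c • (Sum.elim 0 v ᵥ* fromBlocks Hxx F Fᵀ M)) ᵥ*
        fromRows (1 : Matrix n n α) (-(M⁻¹ * Fᵀ)) =
      gx - (F * M⁻¹) *ᵥ h := by
  rw [add_vecMul, smul_vecMul, vecMul_vecMul, fromBlocks_mul_fromRows_one_neg_inv hM,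
    sumElim_vecMul_fromRows, sumElim_vecMul_fromRows, zero_vecMul, vecMul_zero, add_zero,
    smul_zero, add_zero, vecMul_one, vecMul_neg, ← vecMul_vecMul, vecMul_transpose,
    ← mulVec_transpose, transpose_nonsing_inv, hMs, mulVec_mulVec, sub_eq_add_neg]

theorem dotProduct_add_dotProduct_fromBlocks_mulVec [DecidableEq k] {Hxx : Matrix n n ℝ}
    {F : Matrix n k ℝ} {C : Matrix k n ℝ} {M : Matrix k k ℝ} (hM : IsUnit M) (gx : n → ℝ)
    (h : k → ℝ) :
    Sum.elim gx h ⬝ᵥ Sum.elim 0 ((-1 / 2 : ℝ) • (M⁻¹ *ᵥ h)) +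
        Sum.elim 0 ((-1 / 2 : ℝ) • (M⁻¹ *ᵥ h)) ⬝ᵥ
          (fromBlocks Hxx F C M *ᵥ Sum.elim 0 ((-1 / 2 : ℝ) • (M⁻¹ *ᵥ h))) =
      -(1 / 4 : ℝ) * (h ⬝ᵥ (M⁻¹ *ᵥ h)) := by
  rw [fromBlocks_mulVec, Sum.elim_comp_inl, Sum.elim_comp_inr, sumElim_dotProduct_sumElim,
    sumElim_dotProduct_sumElim, mulVec_smul M, mulVec_mulVec,
    mul_nonsing_inv _ ((isUnit_iff_isUnit_det M).mp hM), one_mulVec]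
  simp only [mulVec_zero, zero_add, zero_dotProduct, dotProduct_zero, dotProduct_smul,
    smul_dotProduct, dotProduct_comm (M⁻¹ *ᵥ h) h, smul_eq_mul]
  ring

end PolicyEvaluation

theorem posSemidef_sub_of_saddle {n m d : Type*} [Fintype n] [Fintype m] [Fintype d]
    [DecidableEq n] [DecidableEq m] [DecidableEq d] {Hxx : Matrix n n ℝ}
    {F : Matrix n (m ⊕ d) ℝ} {M : Matrix (m ⊕ d) (m ⊕ d) ℝ} (hHxx : Hxxᵀ = Hxx)
    (hM : IsUnit M) (hMs : Mᵀ = M)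
    (hpos : ∀ x u, 0 ≤ Sum.elim x (Sum.elim u 0) ⬝ᵥ
      (fromBlocks Hxx F Fᵀ M *ᵥ Sum.elim x (Sum.elim u 0)))
    (hneg : ∀ w, Sum.elim 0 (Sum.elim 0 w) ⬝ᵥ
      (fromBlocks Hxx F Fᵀ M *ᵥ Sum.elim 0 (Sum.elim 0 w)) ≤ 0) :
    (Hxx - F * M⁻¹ * Fᵀ).PosSemidef := by
  have hHs : (fromBlocks Hxx F Fᵀ M)ᵀ = fromBlocks Hxx F Fᵀ M := by
    rw [fromBlocks_transpose, hHxx, hMs, transpose_transpose]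
  set T := fromRows (1 : Matrix n n ℝ) (-(M⁻¹ * Fᵀ))
  rw [← transpose_fromRows_mul_fromBlocks_mul_fromRows hM]
  refine .of_dotProduct_mulVec_nonneg ?_ fun x => ?_
  · rw [isHermitian_iff_isSymm]
    simp only [IsSymm, transpose_mul, transpose_transpose, hHs, Matrix.mul_assoc]
  obtain ⟨u, w, huw⟩ : ∃ (u : m → ℝ) (w : d → ℝ),
      T *ᵥ x = Sum.elim x (Sum.elim u 0) + (Sum.elim 0 (Sum.elim 0 w) : n ⊕ m ⊕ d → ℝ) :=
    ⟨fun j => (T *ᵥ x) (.inr (.inl j)), fun j => (T *ᵥ x) (.inr (.inr j)), by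
      ext (i | i | i) <;> simp [T, fromRows_mulVec]⟩
  -- the `(u, w)`-rows of `fromBlocks Hxx F Fᵀ M * T` vanish
  have hstat : Sum.elim 0 (Sum.elim 0 w) ⬝ᵥ (fromBlocks Hxx F Fᵀ M *ᵥ (T *ᵥ x)) = 0 := by
    rw [mulVec_mulVec, fromBlocks_mul_fromRows_one_neg_inv hM, fromRows_mulVec,
      zero_mulVec]
    simp
  rw [star_trivial, ← mulVec_mulVec, ← mulVec_mulVec, dotProduct_mulVec x Tᵀ, vecMul_transpose,
    huw, add_dotProduct_mulVec_add_of_dotProduct_mulVec_eq_zero hHs (huw ▸ hstat)]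
  linarith [hpos x u, hneg w]

section QMatrix
variable {n m d : Type*} [Fintype n] [DecidableEq d]
  (A : Matrix n n ℝ) (B : Matrix n m ℝ) (E : Matrix n d ℝ) (Q : Matrix n n ℝ)
  (R : Matrix m m ℝ) (α lam : ℝ)

/-- The quadratic coefficient `H` of the Q-function `(x, u, w) ↦ [x; u; w]ᵀ H [x; u; w] + …`
associated with the value matrix `P`. -/
def qMatrix (P : Matrix n n ℝ) : Matrix (n ⊕ m ⊕ d) (n ⊕ m ⊕ d) ℝ :=
  fromBlocks Q 0 0 (fromBlocks R 0 0 ((-lam) • 1)) +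
    α • ((fromCols A (fromCols B E))ᵀ * P * fromCols A (fromCols B E))

theorem qMatrix_eq_fromBlocks (P : Matrix n n ℝ) :
    qMatrix A B E Q R α lam P = fromBlocks (Q + α • (Aᵀ * P * A))
      (fromCols (α • (Aᵀ * P * B)) (α • (Aᵀ * P * E)))
      (fromRows (α • (Bᵀ * P * A)) (α • (Eᵀ * P * A)))
      (fromBlocks (R + α • (Bᵀ * P * B)) (α • (Bᵀ * P * E)) (α • (Eᵀ * P * B))
        (α • (Eᵀ * P * E) - lam • (1 : Matrix d d ℝ))) := by
  simp only [qMatrix, transpose_fromCols, fromRows_mul, mul_fromCols]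
  ext (i | i | i) (j | j | j) <;> simp [sub_eq_neg_add]

theorem qMatrix_eq_fromBlocks_transpose {P : Matrix n n ℝ} (hP : Pᵀ = P) :
    qMatrix A B E Q R α lam P = fromBlocks (Q + α • (Aᵀ * P * A))
      (fromCols (α • (Aᵀ * P * B)) (α • (Aᵀ * P * E)))
      (fromCols (α • (Aᵀ * P * B)) (α • (Aᵀ * P * E)))ᵀ
      (fromBlocks (R + α • (Bᵀ * P * B)) (α • (Bᵀ * P * E)) (α • (Bᵀ * P * E))ᵀ
        (α • (Eᵀ * P * E) - lam • (1 : Matrix d d ℝ))) := by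
  simp only [qMatrix_eq_fromBlocks, transpose_fromCols, transpose_smul, transpose_mul,
    transpose_transpose, hP, Matrix.mul_assoc]

theorem sumElim_dotProduct_qMatrix_mulVec [Fintype m] [Fintype d] (P : Matrix n n ℝ)
    (x : n → ℝ) (u : m → ℝ) (w : d → ℝ) :
    Sum.elim x (Sum.elim u w) ⬝ᵥ (qMatrix A B E Q R α lam P *ᵥ Sum.elim x (Sum.elim u w)) =
      x ⬝ᵥ (Q *ᵥ x) + u ⬝ᵥ (R *ᵥ u) - lam * (w ⬝ᵥ w) +
        α * ((A *ᵥ x + B *ᵥ u + E *ᵥ w) ⬝ᵥ (P *ᵥ (A *ᵥ x + B *ᵥ u + E *ᵥ w))) := by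
  simp only [qMatrix, add_mulVec, smul_mulVec, ← mulVec_mulVec, dotProduct_add, dotProduct_smul,
    dotProduct_mulVec _ (fromCols A (fromCols B E))ᵀ, vecMul_transpose, fromCols_mulVec_sumElim,
    fromBlocks_mulVec, Sum.elim_comp_inl, Sum.elim_comp_inr, sumElim_dotProduct_sumElim,
    zero_mulVec, one_mulVec, add_zero, zero_add, smul_eq_mul, add_assoc]
  ring

theorem qMatrix_saddle [Fintype m] {P : Matrix n n ℝ} (hα : 0 ≤ α) (hR : R.PosDef)
    (hP : P.PosSemidef)
    (hN : (lam • (1 : Matrix d d ℝ) - α • (Eᵀ * P * E)).PosDef) :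
    (R + α • (Bᵀ * P * B)).PosDef ∧ (-(α • (Eᵀ * P * E) - lam • (1 : Matrix d d ℝ))).PosDef := by
  refine ⟨hR.add_posSemidef ?_, by rwa [neg_sub]⟩
  simpa [conjTranspose_eq_transpose_of_trivial] using (hP.conjTranspose_mul_mul_same B).smul hα

theorem posSemidef_riccati [Fintype m] [Fintype d] [DecidableEq n] [DecidableEq m]
    {P : Matrix n n ℝ} (hα : 0 ≤ α) (hQ : Q.PosSemidef) (hR : R.PosDef) (hP : P.PosSemidef)
    (hN : (lam • (1 : Matrix d d ℝ) - α • (Eᵀ * P * E)).PosDef) :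
    (Q + α • (Aᵀ * P * A) - fromCols (α • (Aᵀ * P * B)) (α • (Aᵀ * P * E)) *
      (fromBlocks (R + α • (Bᵀ * P * B)) (α • (Bᵀ * P * E)) (α • (Bᵀ * P * E))ᵀ
        (α • (Eᵀ * P * E) - lam • (1 : Matrix d d ℝ)))⁻¹ *
      (fromCols (α • (Aᵀ * P * B)) (α • (Aᵀ * P * E)))ᵀ).PosSemidef := by
  obtain ⟨hu, hw⟩ := qMatrix_saddle B E R α lam hα hR hP hN
  have hH := qMatrix_eq_fromBlocks_transpose A B E Q R α lam hP.transpose_eq_self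
  refine posSemidef_sub_of_saddle ?_ (isUnit_fromBlocks_of_saddle hu hw)
    (transpose_fromBlocks_of_saddle hu hw) (fun x u => ?_) (fun w => ?_)
  · simp only [transpose_add, transpose_smul, transpose_mul, transpose_transpose,
      hQ.transpose_eq_self, hP.transpose_eq_self, Matrix.mul_assoc]
  · rw [← hH, sumElim_dotProduct_qMatrix_mulVec, mulVec_zero, dotProduct_zero, mul_zero,
      sub_zero, add_zero]
    have hQx := hQ.dotProduct_mulVec_nonneg x
    have hRu := hR.posSemidef.dotProduct_mulVec_nonneg u
    have hPy := hP.dotProduct_mulVec_nonneg (A *ᵥ x + B *ᵥ u)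
    rw [star_trivial] at hQx hRu hPy
    positivity
  · have := hN.posSemidef.dotProduct_mulVec_nonneg w
    rw [← hH, sumElim_dotProduct_qMatrix_mulVec]
    simp only [star_trivial, sub_mulVec, smul_mulVec, one_mulVec, ← mulVec_mulVec,
      dotProduct_sub, dotProduct_smul, dotProduct_mulVec w Eᵀ, vecMul_transpose, smul_eq_mul,
      mulVec_zero, dotProduct_zero, zero_add] at this ⊢
    linarith

theorem qMatrix_transpose_mul_mul {k : Type*} [Fintype k] (H : Matrix k k ℝ)
    (T : Matrix k n ℝ) :
    qMatrix A B E Q R α lam (Tᵀ * H * T) = fromBlocks Q 0 0 (fromBlocks R 0 0 ((-lam) • 1)) +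
      α • ((T * fromCols A (fromCols B E))ᵀ * H * (T * fromCols A (fromCols B E))) := by
  simp only [qMatrix, transpose_mul, Matrix.mul_assoc]

end QMatrix

section QVector
variable {n m d : Type*} [Fintype n] (A : Matrix n n ℝ) (B : Matrix n m ℝ) (E : Matrix n d ℝ)
  (α lam : ℝ)

/-- The linear coefficient `G` of the Q-function associated with the value vector `g`. -/
def qVector (wbar : d → ℝ) (g : n → ℝ) : n ⊕ m ⊕ d → ℝ :=
  Sum.elim (α • (Aᵀ *ᵥ g)) (Sum.elim (α • (Bᵀ *ᵥ g)) (α • (Eᵀ *ᵥ g) + (2 * lam) • wbar))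

theorem qVector_eq (wbar : d → ℝ) (g : n → ℝ) :
    qVector A B E α lam wbar g = Sum.elim (α • (g ᵥ* A))
      (Sum.elim (α • (g ᵥ* B)) (α • (g ᵥ* E) + (2 * lam) • wbar)) := by
  simp only [qVector, mulVec_transpose]

theorem qVector_vecMul {k : Type*} [Fintype k] (wbar : d → ℝ) (G : k → ℝ) (T : Matrix k n ℝ) :
    qVector A B E α lam wbar (G ᵥ* T) = α • (G ᵥ* (T * fromCols A (fromCols B E))) +
      Sum.elim (0 : n → ℝ) (Sum.elim (0 : m → ℝ) ((2 * lam) • wbar)) := by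
  rw [qVector_eq, ← vecMul_vecMul, vecMul_fromCols, vecMul_fromCols]
  ext (i | i | i) <;> simp

end QVector

theorem stmt17_general {n m d : ℕ}
    (A : Matrix (Fin n) (Fin n) ℝ) (B : Matrix (Fin n) (Fin m) ℝ)
    (E : Matrix (Fin n) (Fin d) ℝ)
    (Q : Matrix (Fin n) (Fin n) ℝ) (R : Matrix (Fin m) (Fin m) ℝ)
    (α lam : ℝ) (hα : α ∈ Set.Ioo (0 : ℝ) 1)
    (hQ : Q.PosSemidef) (hR : R.PosDef)
    (wbar : Fin d → ℝ)
    (Sighat : Matrix (Fin d) (Fin d) ℝ)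
    (hSig0 : Sighat = 0)
    -- the value-iteration sequences
    (Pseq : ℕ → Matrix (Fin n) (Fin n) ℝ) (gseq : ℕ → Fin n → ℝ) (zseq : ℕ → ℝ)
    (hP0 : Pseq 0 = 0) (hg0 : gseq 0 = 0) (hz0 : zseq 0 = 0)
    (hVIrec : ∀ i : ℕ,
      ∀ Hxx Hxu Hxw Huu Huw Hww Gx Gu Gw,
        Hxx = Q + α • (Aᵀ * Pseq i * A) →
        Hxu = α • (Aᵀ * Pseq i * B) →
        Hxw = α • (Aᵀ * Pseq i * E) →
        Huu = R + α • (Bᵀ * Pseq i * B) →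
        Huw = α • (Bᵀ * Pseq i * E) →
        Hww = α • (Eᵀ * Pseq i * E) - lam • (1 : Matrix (Fin d) (Fin d) ℝ) →
        Gx = α • (Aᵀ *ᵥ gseq i) →
        Gu = α • (Bᵀ *ᵥ gseq i) →
        Gw = α • (Eᵀ *ᵥ gseq i) + (2 * lam) • wbar →
        Pseq (i + 1) = Hxx - fromCols Hxu Hxw *
            (fromBlocks Huu Huw Huwᵀ Hww)⁻¹ * (fromCols Hxu Hxw)ᵀ ∧
        gseq (i + 1) = Gx - (fromCols Hxu Hxw *
            (fromBlocks Huu Huw Huwᵀ Hww)⁻¹) *ᵥ Sum.elim Gu Gw ∧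
        zseq (i + 1) = α * zseq i - lam * (wbar ⬝ᵥ wbar)
          - Matrix.trace (Hww⁻¹ * (lam ^ 2 • Sighat + (1 / 4 : ℝ) • vecMulVec Gw Gw))
          - (1 / 4 : ℝ) * ((Gu - (Huw * Hww⁻¹) *ᵥ Gw) ⬝ᵥ
              ((Huu - Huw * Hww⁻¹ * Huwᵀ)⁻¹ *ᵥ (Gu - (Huw * Hww⁻¹) *ᵥ Gw))))
    -- fixed matrices of the Q-learning iteration
    (W : Matrix (Fin n ⊕ (Fin m ⊕ Fin d)) (Fin n ⊕ (Fin m ⊕ Fin d)) ℝ)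
    (hW : W = fromBlocks Q 0 0
      (fromBlocks R 0 0 ((-lam) • (1 : Matrix (Fin d) (Fin d) ℝ))))
    (S : Matrix (Fin n) (Fin n ⊕ (Fin m ⊕ Fin d)) ℝ)
    (hS : S = fromCols A (fromCols B E))
    (c : Fin n ⊕ (Fin m ⊕ Fin d) → ℝ)
    (hc : c = Sum.elim (0 : Fin n → ℝ) (Sum.elim (0 : Fin m → ℝ) ((2 * lam) • wbar)))
    -- the Q-learning sequences
    (Hs : ℕ → Matrix (Fin n ⊕ (Fin m ⊕ Fin d)) (Fin n ⊕ (Fin m ⊕ Fin d)) ℝ)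
    (Gs : ℕ → Fin n ⊕ (Fin m ⊕ Fin d) → ℝ) (ss : ℕ → ℝ)
    (Ks : ℕ → Matrix (Fin m) (Fin n) ℝ) (rs : ℕ → Fin m → ℝ)
    (Ls : ℕ → Matrix (Fin d) (Fin n) ℝ) (ls : ℕ → Fin d → ℝ)
    (hH0 : Hs 0 = 0) (hG0 : Gs 0 = 0) (hs0 : ss 0 = 0)
    (hQLrec : ∀ i : ℕ,
      ∀ (T : Matrix (Fin n ⊕ (Fin m ⊕ Fin d)) (Fin n) ℝ)
        (b : Fin n ⊕ (Fin m ⊕ Fin d) → ℝ),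
        T = fromRows (1 : Matrix (Fin n) (Fin n) ℝ) (fromRows (Ks i) (Ls i)) →
        b = Sum.elim (0 : Fin n → ℝ) (Sum.elim (rs i) (ls i)) →
        Hs (i + 1) = W + α • ((T * S)ᵀ * Hs i * (T * S)) ∧
        Gs (i + 1) = α • ((Gs i + (2 : ℝ) • (b ᵥ* Hs i)) ᵥ* (T * S)) + c ∧
        ss (i + 1) = α * (ss i + Gs i ⬝ᵥ b + b ⬝ᵥ (Hs i *ᵥ b))
          - lam * (wbar ⬝ᵥ wbar))
    -- the policies, computed from the blocks of (H_i, G_i) for i ≥ 1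
    (hpol : ∀ i : ℕ, 1 ≤ i →
      ∀ (Hxu : Matrix (Fin n) (Fin m) ℝ) (Hxw : Matrix (Fin n) (Fin d) ℝ)
        (Huu : Matrix (Fin m) (Fin m) ℝ) (Huw : Matrix (Fin m) (Fin d) ℝ)
        (Hww : Matrix (Fin d) (Fin d) ℝ) (Gu : Fin m → ℝ) (Gw : Fin d → ℝ),
        Hxu = (Hs i).submatrix Sum.inl (fun a : Fin m => Sum.inr (Sum.inl a)) →
        Hxw = (Hs i).submatrix Sum.inl (fun a : Fin d => Sum.inr (Sum.inr a)) →
        Huu = (Hs i).submatrix (fun a : Fin m => Sum.inr (Sum.inl a))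
          (fun a : Fin m => Sum.inr (Sum.inl a)) →
        Huw = (Hs i).submatrix (fun a : Fin m => Sum.inr (Sum.inl a))
          (fun a : Fin d => Sum.inr (Sum.inr a)) →
        Hww = (Hs i).submatrix (fun a : Fin d => Sum.inr (Sum.inr a))
          (fun a : Fin d => Sum.inr (Sum.inr a)) →
        Gu = (fun a : Fin m => Gs i (Sum.inr (Sum.inl a))) →
        Gw = (fun a : Fin d => Gs i (Sum.inr (Sum.inr a))) →
        Ks i = (Huu - Huw * Hww⁻¹ * Huwᵀ)⁻¹ * (Huw * Hww⁻¹ * Hxwᵀ - Hxuᵀ) ∧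
        rs i = (-(1 : ℝ) / 2) • ((Huu - Huw * Hww⁻¹ * Huwᵀ)⁻¹ *ᵥ
          (Gu - (Huw * Hww⁻¹) *ᵥ Gw)) ∧
        Ls i = (Hww - Huwᵀ * Huu⁻¹ * Huw)⁻¹ * (Huwᵀ * Huu⁻¹ * Hxuᵀ - Hxwᵀ) ∧
        ls i = (-(1 : ℝ) / 2) • ((Hww - Huwᵀ * Huu⁻¹ * Huw)⁻¹ *ᵥ
          (Gw - (Huwᵀ * Huu⁻¹) *ᵥ Gu)))
    -- definiteness along the value iteration
    (hpd : ∀ i,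
      (lam • (1 : Matrix (Fin d) (Fin d) ℝ) - α • (Eᵀ * Pseq i * E)).PosDef) :
    ∀ i : ℕ,
      Hs (i + 1) = fromBlocks (Q + α • (Aᵀ * Pseq i * A))
          (fromCols (α • (Aᵀ * Pseq i * B)) (α • (Aᵀ * Pseq i * E)))
          (fromRows (α • (Bᵀ * Pseq i * A)) (α • (Eᵀ * Pseq i * A)))
          (fromBlocks (R + α • (Bᵀ * Pseq i * B)) (α • (Bᵀ * Pseq i * E))
            (α • (Eᵀ * Pseq i * B))
            (α • (Eᵀ * Pseq i * E) - lam • (1 : Matrix (Fin d) (Fin d) ℝ))) ∧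
      Gs (i + 1) = Sum.elim (α • (gseq i ᵥ* A))
          (Sum.elim (α • (gseq i ᵥ* B)) (α • (gseq i ᵥ* E) + (2 * lam) • wbar)) ∧
      ss (i + 1) = α * zseq i - lam * (wbar ⬝ᵥ wbar) := by
  subst hSig0 hW hS hc
  have hVI i := hVIrec i _ _ _ _ _ _ _ _ _ rfl rfl rfl rfl rfl rfl rfl rfl rfl
  have hPsd i : (Pseq i).PosSemidef := by
    induction i with
    | zero => exact hP0 ▸ PosSemidef.zero
    | succ i ih => exact (hVI i).1 ▸ posSemidef_riccati A B E Q R α lam hα.1.le hQ hR ih (hpd i)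
  suffices h : ∀ i, Hs (i + 1) = qMatrix A B E Q R α lam (Pseq i) ∧
      Gs (i + 1) = qVector A B E α lam wbar (gseq i) ∧
      ss (i + 1) = α * zseq i - lam * (wbar ⬝ᵥ wbar) by
    intro i
    rw [← qMatrix_eq_fromBlocks, ← qVector_eq]
    exact h i
  intro i
  induction i with
  | zero =>
    obtain ⟨h1, h2, h3⟩ := hQLrec 0 _ _ rfl rfl
    exact ⟨by simp [h1, hH0, hP0, qMatrix], by simp [h2, hG0, hH0, hg0, qVector],
      by simp [h3, hs0, hG0, hH0, hz0]⟩
  | succ i ih =>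
    obtain ⟨ihH, ihG, ihs⟩ := ih
    obtain ⟨hu, hw⟩ := qMatrix_saddle B E R α lam hα.1.le hR (hPsd i) (hpd i)
    have hM := isUnit_fromBlocks_of_saddle (Huw := α • (Bᵀ * Pseq i * E)) hu hw
    have hH := ihH.trans
      (qMatrix_eq_fromBlocks_transpose A B E Q R α lam (hPsd i).transpose_eq_self)
    obtain ⟨hU, hv⟩ := schur_policy_eq hH ihG hu hw (hpol (i + 1) (by omega))
    obtain ⟨h1, h2, h3⟩ := hQLrec (i + 1) _ _ rfl rfl
    refine ⟨?_, ?_, ?_⟩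
    · rw [h1, hU, hH, ← qMatrix_transpose_mul_mul,
        transpose_fromRows_mul_fromBlocks_mul_fromRows hM, ← (hVI i).1]
    · rw [h2, hU, hH, ihG, qVector, ← qVector_vecMul,
        vecMul_fromRows_one_neg_inv hM (transpose_fromBlocks_of_saddle hu hw), ← (hVI i).2.1]
    · obtain ⟨-, hww, hdu, -⟩ := isUnit_of_saddle (Huw := α • (Bᵀ * Pseq i * E)) hu hw
      rw [h3, ihs, hv, hH, ihG, qVector, add_assoc,
        dotProduct_add_dotProduct_fromBlocks_mulVec hM, (hVI i).2.2,
        sumElim_dotProduct_inv_fromBlocks_mulVec hww hw.transpose_eq_self_of_neg hdu, smul_zero,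
        zero_add, Matrix.mul_smul, trace_smul, trace_mul_vecMulVec, smul_eq_mul]
      ring

/-- the exact-iteration invariant of distributionally robust Q-learning:
with `Σ̂ = 0` in the `z`-recursion, each Q-learning parameter update coincides with one
step of the Riccati-type value iteration, i.e. for every `i ≥ 1` the matrix `H_i` has the
standard block structure built from `P_{i−1}`, `G_i` is built from `g_{i−1}`, and
`s_i = αz_{i−1} − λ‖w̄‖²`. -/
theorem stmt17 {n m d : ℕ}
    (A : Matrix (Fin n) (Fin n) ℝ) (B : Matrix (Fin n) (Fin m) ℝ)
    (E : Matrix (Fin n) (Fin d) ℝ)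
    (Q : Matrix (Fin n) (Fin n) ℝ) (R : Matrix (Fin m) (Fin m) ℝ)
    (α lam : ℝ) (hα : α ∈ Set.Ioo (0 : ℝ) 1) (hlam : 0 < lam)
    (hQ : Q.PosSemidef) (hR : R.PosDef)
    (wbar : Fin d → ℝ)
    (Sighat : Matrix (Fin d) (Fin d) ℝ) (hSig : Sighat.PosSemidef)
    (hSig0 : Sighat = 0)
    -- the value-iteration sequences
    (Pseq : ℕ → Matrix (Fin n) (Fin n) ℝ) (gseq : ℕ → Fin n → ℝ) (zseq : ℕ → ℝ)
    (hP0 : Pseq 0 = 0) (hg0 : gseq 0 = 0) (hz0 : zseq 0 = 0)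
    (hVIrec : ∀ i : ℕ,
      ∀ Hxx Hxu Hxw Huu Huw Hww Gx Gu Gw,
        Hxx = Q + α • (Aᵀ * Pseq i * A) →
        Hxu = α • (Aᵀ * Pseq i * B) →
        Hxw = α • (Aᵀ * Pseq i * E) →
        Huu = R + α • (Bᵀ * Pseq i * B) →
        Huw = α • (Bᵀ * Pseq i * E) →
        Hww = α • (Eᵀ * Pseq i * E) - lam • (1 : Matrix (Fin d) (Fin d) ℝ) →
        Gx = α • (Aᵀ *ᵥ gseq i) →
        Gu = α • (Bᵀ *ᵥ gseq i) →
        Gw = α • (Eᵀ *ᵥ gseq i) + (2 * lam) • wbar →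
        Pseq (i + 1) = Hxx - fromCols Hxu Hxw *
            (fromBlocks Huu Huw Huwᵀ Hww)⁻¹ * (fromCols Hxu Hxw)ᵀ ∧
        gseq (i + 1) = Gx - (fromCols Hxu Hxw *
            (fromBlocks Huu Huw Huwᵀ Hww)⁻¹) *ᵥ Sum.elim Gu Gw ∧
        zseq (i + 1) = α * zseq i - lam * (wbar ⬝ᵥ wbar)
          - Matrix.trace (Hww⁻¹ * (lam ^ 2 • Sighat + (1 / 4 : ℝ) • vecMulVec Gw Gw))
          - (1 / 4 : ℝ) * ((Gu - (Huw * Hww⁻¹) *ᵥ Gw) ⬝ᵥ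
              ((Huu - Huw * Hww⁻¹ * Huwᵀ)⁻¹ *ᵥ (Gu - (Huw * Hww⁻¹) *ᵥ Gw))))
    -- fixed matrices of the Q-learning iteration
    (W : Matrix (Fin n ⊕ (Fin m ⊕ Fin d)) (Fin n ⊕ (Fin m ⊕ Fin d)) ℝ)
    (hW : W = fromBlocks Q 0 0
      (fromBlocks R 0 0 ((-lam) • (1 : Matrix (Fin d) (Fin d) ℝ))))
    (S : Matrix (Fin n) (Fin n ⊕ (Fin m ⊕ Fin d)) ℝ)
    (hS : S = fromCols A (fromCols B E))
    (c : Fin n ⊕ (Fin m ⊕ Fin d) → ℝ)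
    (hc : c = Sum.elim (0 : Fin n → ℝ) (Sum.elim (0 : Fin m → ℝ) ((2 * lam) • wbar)))
    -- the Q-learning sequences
    (Hs : ℕ → Matrix (Fin n ⊕ (Fin m ⊕ Fin d)) (Fin n ⊕ (Fin m ⊕ Fin d)) ℝ)
    (Gs : ℕ → Fin n ⊕ (Fin m ⊕ Fin d) → ℝ) (ss : ℕ → ℝ)
    (Ks : ℕ → Matrix (Fin m) (Fin n) ℝ) (rs : ℕ → Fin m → ℝ)
    (Ls : ℕ → Matrix (Fin d) (Fin n) ℝ) (ls : ℕ → Fin d → ℝ)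
    (hH0 : Hs 0 = 0) (hG0 : Gs 0 = 0) (hs0 : ss 0 = 0)
    (hK0 : Ks 0 = 0) (hr0 : rs 0 = 0) (hL0 : Ls 0 = 0) (hl0 : ls 0 = 0)
    (hQLrec : ∀ i : ℕ,
      ∀ (T : Matrix (Fin n ⊕ (Fin m ⊕ Fin d)) (Fin n) ℝ)
        (b : Fin n ⊕ (Fin m ⊕ Fin d) → ℝ),
        T = fromRows (1 : Matrix (Fin n) (Fin n) ℝ) (fromRows (Ks i) (Ls i)) →
        b = Sum.elim (0 : Fin n → ℝ) (Sum.elim (rs i) (ls i)) →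
        Hs (i + 1) = W + α • ((T * S)ᵀ * Hs i * (T * S)) ∧
        Gs (i + 1) = α • ((Gs i + (2 : ℝ) • (b ᵥ* Hs i)) ᵥ* (T * S)) + c ∧
        ss (i + 1) = α * (ss i + Gs i ⬝ᵥ b + b ⬝ᵥ (Hs i *ᵥ b))
          - lam * (wbar ⬝ᵥ wbar))
    -- the policies, computed from the blocks of (H_i, G_i) for i ≥ 1
    (hpol : ∀ i : ℕ, 1 ≤ i →
      ∀ (Hxu : Matrix (Fin n) (Fin m) ℝ) (Hxw : Matrix (Fin n) (Fin d) ℝ)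
        (Huu : Matrix (Fin m) (Fin m) ℝ) (Huw : Matrix (Fin m) (Fin d) ℝ)
        (Hww : Matrix (Fin d) (Fin d) ℝ) (Gu : Fin m → ℝ) (Gw : Fin d → ℝ),
        Hxu = (Hs i).submatrix Sum.inl (fun a : Fin m => Sum.inr (Sum.inl a)) →
        Hxw = (Hs i).submatrix Sum.inl (fun a : Fin d => Sum.inr (Sum.inr a)) →
        Huu = (Hs i).submatrix (fun a : Fin m => Sum.inr (Sum.inl a))
          (fun a : Fin m => Sum.inr (Sum.inl a)) →
        Huw = (Hs i).submatrix (fun a : Fin m => Sum.inr (Sum.inl a))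
          (fun a : Fin d => Sum.inr (Sum.inr a)) →
        Hww = (Hs i).submatrix (fun a : Fin d => Sum.inr (Sum.inr a))
          (fun a : Fin d => Sum.inr (Sum.inr a)) →
        Gu = (fun a : Fin m => Gs i (Sum.inr (Sum.inl a))) →
        Gw = (fun a : Fin d => Gs i (Sum.inr (Sum.inr a))) →
        Ks i = (Huu - Huw * Hww⁻¹ * Huwᵀ)⁻¹ * (Huw * Hww⁻¹ * Hxwᵀ - Hxuᵀ) ∧
        rs i = (-(1 : ℝ) / 2) • ((Huu - Huw * Hww⁻¹ * Huwᵀ)⁻¹ *ᵥ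
          (Gu - (Huw * Hww⁻¹) *ᵥ Gw)) ∧
        Ls i = (Hww - Huwᵀ * Huu⁻¹ * Huw)⁻¹ * (Huwᵀ * Huu⁻¹ * Hxuᵀ - Hxwᵀ) ∧
        ls i = (-(1 : ℝ) / 2) • ((Hww - Huwᵀ * Huu⁻¹ * Huw)⁻¹ *ᵥ
          (Gw - (Huwᵀ * Huu⁻¹) *ᵥ Gu)))
    -- definiteness along the value iteration
    (hpd : ∀ i,
      (lam • (1 : Matrix (Fin d) (Fin d) ℝ) - α • (Eᵀ * Pseq i * E)).PosDef) :
    ∀ i : ℕ,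
      Hs (i + 1) = fromBlocks (Q + α • (Aᵀ * Pseq i * A))
          (fromCols (α • (Aᵀ * Pseq i * B)) (α • (Aᵀ * Pseq i * E)))
          (fromRows (α • (Bᵀ * Pseq i * A)) (α • (Eᵀ * Pseq i * A)))
          (fromBlocks (R + α • (Bᵀ * Pseq i * B)) (α • (Bᵀ * Pseq i * E))
            (α • (Eᵀ * Pseq i * B))
            (α • (Eᵀ * Pseq i * E) - lam • (1 : Matrix (Fin d) (Fin d) ℝ))) ∧
      Gs (i + 1) = Sum.elim (α • (gseq i ᵥ* A))
          (Sum.elim (α • (gseq i ᵥ* B)) (α • (gseq i ᵥ* E) + (2 * lam) • wbar)) ∧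
      ss (i + 1) = α * zseq i - lam * (wbar ⬝ᵥ wbar) :=
  stmt17_general A B E Q R α lam hα hQ hR wbar Sighat hSig0 Pseq gseq zseq hP0 hg0 hz0 hVIrec W hW S
    hS c hc Hs Gs ss Ks rs Ls ls hH0 hG0 hs0 hQLrec hpol hpd
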